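/- Let F be a field, n ≥ 2, and V an n-dimensional F-vector space. A special configuration is a tuple (L_0, …, L_{n−1}, M_0, …, M_{n−1}) of one-dimensional subspaces of V such that L_0, …, L_{n−1} together span V (so V = L_0 ⊕ ⋯ ⊕ L_{n−1}), and for each i (indices taken modulo n) M_i is contained in L_i + L_{i+1} with M_i ≠ L_i and M_i ≠ L_{i+1}. Then: (1) for each i there is a well-defined F-linear isomorphism φ_i : L_i → L_{i+1} characterized by u + φ_i(u) ∈ M_i for all u ∈ L_i, and the composition φ_{n−1} ∘ ⋯ ∘ φ_1 ∘ φ_0 : L_0 → L_0 is multiplication by a scalar a ∈ F^*, called the generalized cross-ratio of the configuration; (2) the generalized cross-ratio is invariant under the action of GL(V), and two special configurations have the same generalized cross-ratio if and only if they lie in the same GL(V)-orbit; (3) every element a ∈ F^* occurs as the generalized cross-ratio of some special configuration. In other words, the generalized cross-ratio induces a bijection between the set of special configurations modulo projective equivalence and F^* = ℙ^1(F) ∖ {0, ∞}. -/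

import Mathlib

open Module

variable (F : Type*) [Field F] {V : Type*} [AddCommGroup V] [Module F V]

/-- A special configuration of `2n` lines in an `n`-dimensional space `V`: lines
`L_0, …, L_{n−1}` spanning `V` (hence `V = L_0 ⊕ ⋯ ⊕ L_{n−1}`), and for each `i` (mod `n`)
a line `M_i ⊆ L_i + L_{i+1}` with `M_i ≠ L_i`, `M_i ≠ L_{i+1}`. -/
def IsSpecialConfiguration {n : ℕ} [NeZero n] (L M : Fin n → Submodule F V) : Prop :=
  (∀ i, finrank F (L i) = 1) ∧ (∀ i, finrank F (M i) = 1) ∧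
  (⨆ i, L i) = ⊤ ∧
  ∀ i, M i ≤ L i ⊔ L (i + 1) ∧ M i ≠ L i ∧ M i ≠ L (i + 1)

/-- `a ∈ F^*` is the generalized cross-ratio of the configuration `(L, M)`:
any chain `u_0 ∈ L_0, u_1 ∈ L_1, …, u_{n−1} ∈ L_{n−1}, u_n ∈ L_0` with
`u_i + u_{i+1} ∈ M_i` for all `i` (i.e. `u_{i+1} = φ_i(u_i)`) closes up to `u_n = a·u_0`;
thus the composition `φ_{n−1} ∘ ⋯ ∘ φ_0 : L_0 → L_0` is multiplication by `a`. -/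
def IsGenCrossRatio {n : ℕ} [NeZero n] (L M : Fin n → Submodule F V) (a : Fˣ) : Prop :=
  ∀ u : Fin (n + 1) → V,
    (∀ i : Fin n, u i.castSucc ∈ L i) → u (Fin.last n) ∈ L 0 →
    (∀ i : Fin n, u i.castSucc + u i.succ ∈ M i) →
    u (Fin.last n) = (a : F) • u 0

/-!
In a basis `e` adapted to the lines `L_i`, every special configuration takes the form
`L_i = F e_i`, `M_i = F (e_i + c_i e_{i+1})` with `c_i ∈ F^*`. There `φ_i (t e_i) = c_i t e_{i+1}`,
so going once around the cycle multiplies by `∏ c_i`. Rescaling the basis to `D_i e_i` replaces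
`c_i` by `c_i D_{i+1} / D_i`; such a `D` turns `c` into any `c'` with the same product, which
gives the orbit classification.
-/

open Submodule

theorem Fin.last_eq_mul_prod {M : Type*} [CommMonoid M] :
    ∀ {n : ℕ} (t : Fin (n + 1) → M) (c : Fin n → M),
      (∀ i, t i.succ = t i.castSucc * c i) → t (Fin.last n) = t 0 * ∏ i, c i
  | 0, t, _, _ => by simp
  | n + 1, t, c, h => by
    have ih := Fin.last_eq_mul_prod (fun i => t i.castSucc) (fun i => c i.castSucc)
      fun i => by simpa only [Fin.succ_castSucc] using h i.castSucc
    rw [← Fin.succ_last, h, ih, Fin.castSucc_zero, Fin.prod_univ_castSucc, mul_assoc]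

theorem Fin.exists_mul_eq_of_prod_eq_one {G : Type*} [CommMonoid G] {n : ℕ} [NeZero n]
    (r : Fin n → G) (hr : ∏ i, r i = 1) : ∃ D : Fin n → G, ∀ i, D (i + 1) = D i * r i := by
  obtain ⟨m, rfl⟩ := Nat.exists_eq_succ_of_ne_zero (NeZero.ne n)
  refine ⟨Fin.partialProd (r ∘ Fin.castSucc), Fin.lastCases ?_ fun i => ?_⟩
  · rw [Fin.last_add_one, Fin.partialProd_zero, ← hr, Fin.prod_univ_castSucc,
      Fin.last_eq_mul_prod _ _ (Fin.partialProd_succ _), Fin.partialProd_zero, one_mul]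
    rfl
  · rw [Fin.coeSucc_eq_succ, Fin.partialProd_succ]
    rfl

theorem Fin.add_one_ne_self {n : ℕ} [NeZero n] (hn : 2 ≤ n) (i : Fin n) : i + 1 ≠ i := by
  have := Fin.nontrivial_iff_two_le.2 hn
  simp only [ne_eq, add_eq_left, one_eq_zero_iff]
  omega

section Lines

variable {F}

theorem Submodule.exists_ne_zero_eq_span_singleton {L : Submodule F V} (hL : finrank F L = 1) :
    ∃ v ≠ 0, L = F ∙ v := by
  obtain ⟨v, hvL, hv⟩ := L.ne_bot_iff.mp (isAtom_iff_finrank_eq_one.2 hL).ne_bot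
  refine ⟨v, hv, ((isAtom_iff_finrank_eq_one.2 hL).le_iff_eq ?_).1 ?_ |>.symm⟩
  · rwa [Ne, span_singleton_eq_bot]
  · rwa [span_le, Set.singleton_subset_iff]

theorem Submodule.exists_eq_span_add_smul {x y : V} {M : Submodule F V} (hM : finrank F M = 1)
    (hle : M ≤ (F ∙ x) ⊔ (F ∙ y)) (hx : M ≠ F ∙ x) (hy : M ≠ F ∙ y) :
    ∃ c : Fˣ, M = F ∙ (x + (c : F) • y) := by
  obtain ⟨m, hm, rfl⟩ := exists_ne_zero_eq_span_singleton hM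
  obtain ⟨_, hp, _, hq, rfl⟩ := mem_sup.1 (hle (mem_span_singleton_self _))
  obtain ⟨p, rfl⟩ := mem_span_singleton.1 hp
  obtain ⟨q, rfl⟩ := mem_span_singleton.1 hq
  have hp : p ≠ 0 := by
    rintro rfl
    have hq : q ≠ 0 := by rintro rfl; simp at hm
    simp [span_singleton_smul_eq (IsUnit.mk0 q hq)] at hy
  have hq : q ≠ 0 := by
    rintro rfl
    simp [span_singleton_smul_eq (IsUnit.mk0 p hp)] at hx
  refine ⟨Units.mk0 (q / p) (div_ne_zero hq hp), ?_⟩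
  rw [Units.val_mk0, ← span_singleton_smul_eq (IsUnit.mk0 p hp) (x + _), smul_add, smul_smul,
    mul_div_cancel₀ _ hp]

variable {x y : V}

theorem LinearIndependent.eq_mul_of_smul_add_smul_mem (hxy : LinearIndependent F ![x, y])
    {s t c : F} (h : s • x + t • y ∈ F ∙ (x + c • y)) : t = s * c := by
  obtain ⟨r, hr⟩ := mem_span_singleton.1 h
  obtain ⟨hrs, hrt⟩ := LinearIndependent.pair_iff.1 hxy (r - s) (r * c - t) (by
    rw [← sub_eq_zero] at hr
    linear_combination (norm := module) hr)
  rw [sub_eq_zero] at hrs hrt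
  rw [← hrt, hrs]

theorem LinearIndependent.disjoint_span_add_smul_right (hxy : LinearIndependent F ![x, y])
    (c : F) : Disjoint (F ∙ (x + c • y)) (F ∙ y) := by
  refine disjoint_def.2 fun v hv hvy => ?_
  obtain ⟨t, rfl⟩ := mem_span_singleton.1 hvy
  have := hxy.eq_mul_of_smul_add_smul_mem (s := 0) (t := t) (c := c)
    (by rwa [zero_smul, zero_add])
  rw [this, zero_mul, zero_smul]

theorem LinearIndependent.disjoint_span_add_smul_left (hxy : LinearIndependent F ![x, y])
    {c : F} (hc : c ≠ 0) : Disjoint (F ∙ (x + c • y)) (F ∙ x) := by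
  refine disjoint_def.2 fun v hv hvx => ?_
  obtain ⟨s, rfl⟩ := mem_span_singleton.1 hvx
  have := hxy.eq_mul_of_smul_add_smul_mem (s := s) (t := 0) (c := c)
    (by rwa [zero_smul, add_zero])
  rw [(mul_eq_zero.1 this.symm).resolve_right hc, zero_smul]

theorem LinearIndependent.existsUnique_linearMap_add_mem (hxy : LinearIndependent F ![x, y])
    {c : F} (hc : c ≠ 0) :
    (∃! φ : (F ∙ x) →ₗ[F] (F ∙ y), ∀ u : F ∙ x, (u : V) + φ u ∈ F ∙ (x + c • y)) ∧
    ∀ φ : (F ∙ x) →ₗ[F] (F ∙ y), (∀ u : F ∙ x, (u : V) + φ u ∈ F ∙ (x + c • y)) →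
      Function.Bijective φ := by
  let ιx := LinearEquiv.toSpanNonzeroSingleton F V x (hxy.ne_zero 0)
  let ψ : (F ∙ x) ≃ₗ[F] (F ∙ y) := ιx.symm ≪≫ₗ LinearEquiv.smulOfNeZero F F c hc
    ≪≫ₗ LinearEquiv.toSpanNonzeroSingleton F V y (hxy.ne_zero 1)
  have hψ : ∀ u : F ∙ x, (u : V) + ψ u ∈ F ∙ (x + c • y) := by
    intro u
    obtain ⟨s, rfl⟩ := ιx.surjective u
    refine mem_span_singleton.2 ⟨s, ?_⟩
    simp only [ψ, LinearEquiv.trans_apply, LinearEquiv.symm_apply_apply,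
      LinearEquiv.smulOfNeZero_apply]
    change s • (x + c • y) = s • x + (c • s) • y
    module
  have hunique : ∀ φ : (F ∙ x) →ₗ[F] (F ∙ y),
      (∀ u : F ∙ x, (u : V) + φ u ∈ F ∙ (x + c • y)) → φ = ψ := by
    refine fun φ hφ => LinearMap.ext fun u => Subtype.ext ?_
    rw [← sub_eq_zero]
    refine disjoint_def.1 (hxy.disjoint_span_add_smul_right c) _ ?_ (sub_mem (φ u).2 (ψ u).2)
    simpa using sub_mem (hφ u) (hψ u)
  exact ⟨⟨ψ, hψ, hunique⟩, fun φ hφ => hunique φ hφ ▸ ψ.bijective⟩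

theorem LinearIndependent.add_smul_ne_zero (hxy : LinearIndependent F ![x, y]) (c : F) :
    x + c • y ≠ 0 := fun h =>
  one_ne_zero (LinearIndependent.pair_iff.1 hxy 1 c (by rwa [one_smul])).1

theorem LinearIndependent.span_add_smul_ne_right (hxy : LinearIndependent F ![x, y]) (c : F) :
    F ∙ (x + c • y) ≠ F ∙ y := fun h =>
  hxy.ne_zero 1 (by simpa [h] using hxy.disjoint_span_add_smul_right c)

theorem LinearIndependent.span_add_smul_ne_left (hxy : LinearIndependent F ![x, y]) {c : F}
    (hc : c ≠ 0) : F ∙ (x + c • y) ≠ F ∙ x := fun h =>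
  hxy.ne_zero 0 (by simpa [h] using hxy.disjoint_span_add_smul_left hc)

end Lines

section Basis

variable {F} {n : ℕ} [NeZero n]

def Module.Basis.axisLines {ι : Type*} (e : Basis ι F V) : ι → Submodule F V :=
  fun i => F ∙ e i

def Module.Basis.cyclicLines (e : Basis (Fin n) F V) (c : Fin n → Fˣ) : Fin n → Submodule F V :=
  fun i => F ∙ (e i + (c i : F) • e (i + 1))

theorem Module.Basis.linearIndependent_pair_add_one (hn : 2 ≤ n) (e : Basis (Fin n) F V)
    (i : Fin n) : LinearIndependent F ![e i, e (i + 1)] := by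
  have : ![e i, e (i + 1)] = e ∘ ![i, i + 1] := by
    ext j; fin_cases j <;> rfl
  rw [this]
  refine e.linearIndependent.comp _ fun j k hjk => ?_
  have hne := Fin.add_one_ne_self hn i
  fin_cases j <;> fin_cases k <;> simp_all [hne.symm]

theorem Module.Basis.isSpecialConfiguration_axisLines (hn : 2 ≤ n) (e : Basis (Fin n) F V)
    (c : Fin n → Fˣ) : IsSpecialConfiguration F e.axisLines (e.cyclicLines c) := by
  have hpair := e.linearIndependent_pair_add_one hn
  refine ⟨fun i => finrank_span_singleton (e.ne_zero i),
    fun i => finrank_span_singleton ((hpair i).add_smul_ne_zero _),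
    (span_range_eq_iSup).symm.trans e.span_eq, fun i => ⟨?_, (hpair i).span_add_smul_ne_left
    (c i).ne_zero, (hpair i).span_add_smul_ne_right _⟩⟩
  exact (span_singleton_le_iff_mem _ _).2 (add_mem (mem_sup_left (mem_span_singleton_self _))
    (mem_sup_right (smul_mem _ _ (mem_span_singleton_self _))))

theorem IsSpecialConfiguration.exists_basis (hV : finrank F V = n) {L M : Fin n → Submodule F V}
    (hc : IsSpecialConfiguration F L M) :
    ∃ (e : Basis (Fin n) F V) (c : Fin n → Fˣ), L = e.axisLines ∧ M = e.cyclicLines c := by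
  obtain ⟨hL, hM, hspan, hLM⟩ := hc
  choose v _ hvL using fun i => exists_ne_zero_eq_span_singleton (hL i)
  have hv : ⊤ ≤ span F (Set.range v) := by
    rw [span_range_eq_iSup, ← hspan]
    exact iSup_mono fun i => (hvL i).le
  have hcard : Fintype.card (Fin n) = finrank F V := by simp [hV]
  set e := basisOfTopLeSpanOfCardEqFinrank v hv hcard
  have hLe : ∀ i, L i = F ∙ e i := by
    simpa [e, coe_basisOfTopLeSpanOfCardEqFinrank] using hvL
  choose c hc using fun i => by
    obtain ⟨hle, hne, hne'⟩ := hLM i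
    simp only [hLe] at hle hne hne'
    exact exists_eq_span_add_smul (hM i) hle hne hne'
  exact ⟨e, c, funext hLe, funext hc⟩

open Fin.NatCast in
theorem Fin.natCast_val_succ {n : ℕ} [NeZero n] (i : Fin n) : ((i.succ : ℕ) : Fin n) = i + 1 := by
  rw [Fin.val_succ, Nat.cast_succ, Fin.cast_val_eq_self]

-- The cast `((j : ℕ) : Fin n)` reduces the chain index mod `n`, so `u_n` sits on the line `F e_0`.
open Fin.NatCast in
theorem Module.Basis.isGenCrossRatio_axisLines_prod (hn : 2 ≤ n) (e : Basis (Fin n) F V)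
    (c : Fin n → Fˣ) : IsGenCrossRatio F e.axisLines (e.cyclicLines c) (∏ i, c i) := by
  intro u hL hL0 hM
  have hu : ∀ j : Fin (n + 1), u j ∈ F ∙ e (j : ℕ) :=
    Fin.lastCases (by simpa [axisLines] using hL0) fun i => by simpa [axisLines] using hL i
  choose t ht using fun j => mem_span_singleton.1 (hu j)
  have hstep : ∀ i, t i.succ = t i.castSucc * c i := fun i => by
    have := hM i
    rw [← ht, ← ht, Fin.natCast_val_succ, Fin.val_castSucc, Fin.cast_val_eq_self] at this
    exact (e.linearIndependent_pair_add_one hn i).eq_mul_of_smul_add_smul_mem this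
  rw [← ht, ← ht, Fin.last_eq_mul_prod t _ hstep]
  simp only [Fin.val_last, Fin.natCast_self, Fin.val_zero, Nat.cast_zero, Units.coe_prod,
    mul_comm (t 0), mul_smul]

open Fin.NatCast in
theorem Module.Basis.eq_prod_of_isGenCrossRatio_axisLines (e : Basis (Fin n) F V)
    {c : Fin n → Fˣ} {a : Fˣ} (ha : IsGenCrossRatio F e.axisLines (e.cyclicLines c) a) :
    a = ∏ i, c i := by
  let t := Fin.partialProd fun i => (c i : F)
  have ht : ∀ i, t i.succ = t i.castSucc * c i := Fin.partialProd_succ _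
  have hL : ∀ i : Fin n, t i.castSucc • e (i.castSucc : ℕ) ∈ e.axisLines i := fun i => by
    simpa [axisLines] using smul_mem _ (t i.castSucc) (mem_span_singleton_self (e i))
  have hL0 : t (Fin.last n) • e (Fin.last n : ℕ) ∈ e.axisLines 0 := by
    simpa [axisLines] using smul_mem _ (t (Fin.last n)) (mem_span_singleton_self (e 0))
  have hM : ∀ i : Fin n, t i.castSucc • e (i.castSucc : ℕ) + t i.succ • e (i.succ : ℕ) ∈
      e.cyclicLines c i := fun i => by
    refine mem_span_singleton.2 ⟨t i.castSucc, ?_⟩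
    rw [Fin.natCast_val_succ, ht, Fin.val_castSucc, Fin.cast_val_eq_self]
    module
  have := ha (fun j => t j • e (j : ℕ)) hL hL0 hM
  rw [Fin.last_eq_mul_prod t _ ht] at this
  simp only [Fin.partialProd_zero, one_mul, one_smul, Fin.val_last, Fin.natCast_self,
    Fin.val_zero, Nat.cast_zero, t] at this
  rw [Units.ext_iff, Units.coe_prod]
  exact (smul_left_injective F (e.ne_zero 0) this).symm

theorem Module.Basis.map_equiv_axisLines {ι : Type*} (e f : Basis ι F V) (i : ι) :
    (e.axisLines i).map (e.equiv f (Equiv.refl ι) : V →ₗ[F] V) = f.axisLines i := by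
  simp [axisLines, map_span]

theorem Module.Basis.map_equiv_cyclicLines (e f : Basis (Fin n) F V) (c : Fin n → Fˣ) (i : Fin n) :
    (e.cyclicLines c i).map (e.equiv f (Equiv.refl _) : V →ₗ[F] V) = f.cyclicLines c i := by
  simp [cyclicLines, map_span]

theorem Module.Basis.axisLines_unitsSMul {ι : Type*} (e : Basis ι F V) (D : ι → Fˣ) :
    (e.unitsSMul D).axisLines = e.axisLines :=
  funext fun i => by simp [axisLines, unitsSMul_apply, span_singleton_group_smul_eq]

theorem Module.Basis.cyclicLines_unitsSMul (e : Basis (Fin n) F V) {D c c' : Fin n → Fˣ}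
    (h : ∀ i, c i * D (i + 1) = D i * c' i) :
    (e.unitsSMul D).cyclicLines c = e.cyclicLines c' := funext fun i => by
  have : e.unitsSMul D i + (c i : F) • e.unitsSMul D (i + 1) =
      (D i : F) • (e i + (c' i : F) • e (i + 1)) := by
    simp only [unitsSMul_apply, Units.smul_def, smul_add, smul_smul]
    rw [← Units.val_mul, ← Units.val_mul, h]
  rw [cyclicLines, this, span_singleton_smul_eq (D i).isUnit]
  rfl

theorem Module.Basis.exists_linearEquiv_map_eq (e e' : Basis (Fin n) F V) {c c' : Fin n → Fˣ}
    (h : ∏ i, c i = ∏ i, c' i) :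
    ∃ g : V ≃ₗ[F] V, (∀ i, (e.axisLines i).map (g : V →ₗ[F] V) = e'.axisLines i) ∧
      ∀ i, (e.cyclicLines c i).map (g : V →ₗ[F] V) = e'.cyclicLines c' i := by
  obtain ⟨D, hD⟩ := Fin.exists_mul_eq_of_prod_eq_one (fun i => (c i)⁻¹ * c' i)
    (by rw [Finset.prod_mul_distrib, Finset.prod_inv_distrib, h, inv_mul_cancel])
  have hc : ∀ i, c i * D (i + 1) = D i * c' i := fun i => by
    rw [hD, mul_left_comm, mul_inv_cancel_left]
  refine ⟨e.equiv (e'.unitsSMul D) (Equiv.refl _), fun i => ?_, fun i => ?_⟩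
  · rw [map_equiv_axisLines, axisLines_unitsSMul]
  · rw [map_equiv_cyclicLines, cyclicLines_unitsSMul _ hc]

theorem IsGenCrossRatio.map {L M : Fin n → Submodule F V} {a : Fˣ}
    (ha : IsGenCrossRatio F L M a) (g : V ≃ₗ[F] V) :
    IsGenCrossRatio F (fun i => (L i).map (g : V →ₗ[F] V))
      (fun i => (M i).map (g : V →ₗ[F] V)) a := by
  intro u hL hL0 hM
  simp only [mem_map_equiv, map_add] at hL hL0 hM
  simpa using congrArg g (ha (fun j => g.symm (u j)) hL hL0 hM)

theorem IsSpecialConfiguration.eq_of_isGenCrossRatio (hV : finrank F V = n)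
    {L M : Fin n → Submodule F V} (hc : IsSpecialConfiguration F L M) {a b : Fˣ}
    (ha : IsGenCrossRatio F L M a) (hb : IsGenCrossRatio F L M b) : a = b := by
  obtain ⟨e, c, rfl, rfl⟩ := hc.exists_basis hV
  rw [e.eq_prod_of_isGenCrossRatio_axisLines ha, e.eq_prod_of_isGenCrossRatio_axisLines hb]

end Basis

theorem statement_12 (n : ℕ) [NeZero n] (hn : 2 ≤ n)
    (hV : finrank F V = n) :
    (∀ L M : Fin n → Submodule F V, IsSpecialConfiguration F L M →
      ((∀ i : Fin n,
          (∃! φ : L i →ₗ[F] L (i + 1), ∀ u : L i, ((u : V) + (φ u : V)) ∈ M i) ∧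
          (∀ φ : L i →ₗ[F] L (i + 1),
            (∀ u : L i, ((u : V) + (φ u : V)) ∈ M i) → Function.Bijective φ)) ∧
        ∃! a : Fˣ, IsGenCrossRatio F L M a)) ∧
    (∀ L M : Fin n → Submodule F V, IsSpecialConfiguration F L M →
      ∀ a : Fˣ, IsGenCrossRatio F L M a →
        (∀ g : V ≃ₗ[F] V,
          IsGenCrossRatio F (fun i => (L i).map (g : V →ₗ[F] V))
            (fun i => (M i).map (g : V →ₗ[F] V)) a) ∧
        (∀ L' M' : Fin n → Submodule F V, IsSpecialConfiguration F L' M' →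
          ∀ a' : Fˣ, IsGenCrossRatio F L' M' a' →
            (a = a' ↔ ∃ g : V ≃ₗ[F] V,
              (∀ i, (L i).map (g : V →ₗ[F] V) = L' i) ∧
              (∀ i, (M i).map (g : V →ₗ[F] V) = M' i)))) ∧
    (∀ a : Fˣ, ∃ L M : Fin n → Submodule F V,
      IsSpecialConfiguration F L M ∧ IsGenCrossRatio F L M a) := by
  refine ⟨fun L M hc => ?_, fun L M hc a ha => ⟨ha.map, fun L' M' hc' a' ha' => ⟨?_, ?_⟩⟩,
    fun a => ?_⟩
  · obtain ⟨e, c, rfl, rfl⟩ := hc.exists_basis hV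
    exact ⟨fun i => (e.linearIndependent_pair_add_one hn i).existsUnique_linearMap_add_mem
      (c i).ne_zero, ∏ i, c i, e.isGenCrossRatio_axisLines_prod hn c,
      fun b hb => e.eq_prod_of_isGenCrossRatio_axisLines hb⟩
  · rintro rfl
    obtain ⟨e, c, rfl, rfl⟩ := hc.exists_basis hV
    obtain ⟨e', c', rfl, rfl⟩ := hc'.exists_basis hV
    exact e.exists_linearEquiv_map_eq e' ((e.eq_prod_of_isGenCrossRatio_axisLines ha).symm.trans
      (e'.eq_prod_of_isGenCrossRatio_axisLines ha'))
  · rintro ⟨g, hgL, hgM⟩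
    have hga := ha.map g
    rw [funext hgL, funext hgM] at hga
    exact hc'.eq_of_isGenCrossRatio hV hga ha'
  · have : Module.Finite F V := Module.finite_of_finrank_pos (hV ▸ NeZero.pos n)
    let e := finBasisOfFinrankEq F V hV
    refine ⟨e.axisLines, e.cyclicLines (Pi.mulSingle 0 a), e.isSpecialConfiguration_axisLines hn _,
      ?_⟩
    simpa using e.isGenCrossRatio_axisLines_prod hn (Pi.mulSingle 0 a)
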